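/- There exist finite subsets S₁ ≠ S₂ of the unit sphere in ℝ³ (e.g., the 6 octahedral bonds and the 8 cube-diagonal bonds) whose point groups are equal as subgroups of O(3), but whose extracopularity coefficients differ; hence E distinguishes geometries that point group order cannot. -/

import Mathlib

open scoped RealInnerProductSpace

noncomputable def v3 (a b c : ℝ) : EuclideanSpace ℝ (Fin 3) := (WithLp.equiv 2 _).symm ![a, b, c]

/-- The octahedral geometry: bonds `±e₁, ±e₂, ±e₃`. -/
noncomputable def octS : Set (EuclideanSpace ℝ (Fin 3)) :=
  {v3 1 0 0, v3 (-1) 0 0, v3 0 1 0, v3 0 (-1) 0, v3 0 0 1, v3 0 0 (-1)}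

/-- A normalized cube-diagonal bond `(a,b,c)/√3`. -/
noncomputable def cubev (a b c : ℝ) : EuclideanSpace ℝ (Fin 3) := (Real.sqrt 3)⁻¹ • v3 a b c

/-- The cubic geometry: the 8 normalized cube diagonals `(±1,±1,±1)/√3`. -/
noncomputable def cubeS : Set (EuclideanSpace ℝ (Fin 3)) :=
  {cubev 1 1 1, cubev 1 1 (-1), cubev 1 (-1) 1, cubev 1 (-1) (-1),
   cubev (-1) 1 1, cubev (-1) 1 (-1), cubev (-1) (-1) 1, cubev (-1) (-1) (-1)}

/-- Set of bond angles of a coordination geometry. -/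
def angleSet (S : Set (EuclideanSpace ℝ (Fin 3))) : Set ℝ :=
  {θ | ∃ b ∈ S, ∃ b' ∈ S, b ≠ b' ∧ θ = Real.arccos ⟪b, b'⟫}

/-- The point group of a geometry: all linear isometries of ℝ³ preserving it. -/
def pointGroup (S : Set (EuclideanSpace ℝ (Fin 3))) :
    Set (EuclideanSpace ℝ (Fin 3) ≃ₗᵢ[ℝ] EuclideanSpace ℝ (Fin 3)) :=
  {μ | μ '' S = S}

/-- Extracopularity coefficient `E(S) = log₂(C(k,2)/m)`. -/
noncomputable def Ecoeff (S : Set (EuclideanSpace ℝ (Fin 3))) : ℝ :=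
  Real.logb 2 (Nat.choose S.ncard 2) - Real.logb 2 ((angleSet S).ncard)

/-!
Both point groups agree because each bond set is obtained from the other by a construction
that commutes with every linear isometry. The cube diagonals are the vectors
`(x + y + z) / √3` for mutually orthogonal octahedral bonds `x, y, z`; the octahedral bonds are
the vectors `(√3 / 2) (u - w)` for cube diagonals `u, w` with `⟪u, w⟫ = 1 / 3`. An isometry
preserving one set therefore preserves the other.

The coefficients differ because the bond cosines are `{0, -1}` for the octahedron and
`{1/3, -1/3, -1}` for the cube, and `arccos` is injective on `[-1, 1]`; this gives
`E = log₂ (15 / 2)` and `E = log₂ (28 / 3)`.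
-/

local notation "ℝ³" => EuclideanSpace ℝ (Fin 3)

section Constructions

variable {E F : Type*} [NormedAddCommGroup E] [InnerProductSpace ℝ E]
  [NormedAddCommGroup F] [InnerProductSpace ℝ F]

def orthogonalTripleSums (c : ℝ) (S : Set E) : Set E :=
  {v | ∃ x ∈ S, ∃ y ∈ S, ∃ z ∈ S, ⟪x, y⟫ = 0 ∧ ⟪x, z⟫ = 0 ∧ ⟪y, z⟫ = 0 ∧ v = c • (x + y + z)}

def scaledDifferences (r c : ℝ) (S : Set E) : Set E :=
  {v | ∃ u ∈ S, ∃ w ∈ S, ⟪u, w⟫ = r ∧ v = c • (u - w)}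

lemma LinearIsometryEquiv.image_orthogonalTripleSums (μ : E ≃ₗᵢ[ℝ] F) (c : ℝ) (S : Set E) :
    μ '' orthogonalTripleSums c S = orthogonalTripleSums c (μ '' S) := by
  ext v
  simp only [orthogonalTripleSums, Set.mem_image, Set.mem_ofPred_eq]
  constructor
  · rintro ⟨_, ⟨x, hx, y, hy, z, hz, hxy, hxz, hyz, rfl⟩, rfl⟩
    exact ⟨μ x, ⟨x, hx, rfl⟩, μ y, ⟨y, hy, rfl⟩, μ z, ⟨z, hz, rfl⟩,
      by simpa, by simpa, by simpa, by simp⟩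
  · rintro ⟨_, ⟨x, hx, rfl⟩, _, ⟨y, hy, rfl⟩, _, ⟨z, hz, rfl⟩, hxy, hxz, hyz, rfl⟩
    exact ⟨_, ⟨x, hx, y, hy, z, hz, by simpa using hxy, by simpa using hxz,
      by simpa using hyz, rfl⟩, by simp⟩

lemma LinearIsometryEquiv.image_scaledDifferences (μ : E ≃ₗᵢ[ℝ] F) (r c : ℝ) (S : Set E) :
    μ '' scaledDifferences r c S = scaledDifferences r c (μ '' S) := by
  ext v
  simp only [scaledDifferences, Set.mem_image, Set.mem_ofPred_eq]
  constructor
  · rintro ⟨_, ⟨u, hu, w, hw, huw, rfl⟩, rfl⟩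
    exact ⟨μ u, ⟨u, hu, rfl⟩, μ w, ⟨w, hw, rfl⟩, by simpa, by simp⟩
  · rintro ⟨_, ⟨u, hu, rfl⟩, _, ⟨w, hw, rfl⟩, huw, rfl⟩
    exact ⟨_, ⟨u, hu, w, hw, by simpa using huw, rfl⟩, by simp⟩

end Constructions

lemma pointGroup_subset_of_equivariant {Φ : Set ℝ³ → Set ℝ³}
    (hΦ : ∀ (μ : ℝ³ ≃ₗᵢ[ℝ] ℝ³) (S : Set ℝ³), μ '' Φ S = Φ (μ '' S)) {A B : Set ℝ³}
    (hB : Φ A = B) : pointGroup A ⊆ pointGroup B := by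
  rintro μ (hμ : μ '' A = A)
  show μ '' B = B
  rw [← hB, hΦ, hμ]

def bondCosines (S : Set ℝ³) : Set ℝ := {t | ∃ b ∈ S, ∃ b' ∈ S, b ≠ b' ∧ t = ⟪b, b'⟫}

lemma angleSet_eq_image_bondCosines (S : Set ℝ³) :
    angleSet S = Real.arccos '' bondCosines S := by
  ext θ
  simp only [angleSet, bondCosines, Set.mem_image, Set.mem_ofPred_eq]
  constructor
  · rintro ⟨b, hb, b', hb', hne, rfl⟩
    exact ⟨_, ⟨b, hb, b', hb', hne, rfl⟩, rfl⟩
  · rintro ⟨_, ⟨b, hb, b', hb', hne, rfl⟩, rfl⟩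
    exact ⟨b, hb, b', hb', hne, rfl⟩

lemma ncard_angleSet_of_norm_eq_one {S : Set ℝ³} (hS : ∀ v ∈ S, ‖v‖ = 1) :
    (angleSet S).ncard = (bondCosines S).ncard := by
  rw [angleSet_eq_image_bondCosines]
  refine (Real.arccos_injOn.mono ?_).ncard_image
  rintro _ ⟨b, hb, b', hb', -, rfl⟩
  have := abs_real_inner_le_norm b b'
  rw [hS b hb, hS b' hb', one_mul] at this
  exact abs_le.mp this

@[simp] lemma v3_apply (a b c : ℝ) (i : Fin 3) : v3 a b c i = ![a, b, c] i := rfl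

@[simp] lemma v3_inj {a b c a' b' c' : ℝ} :
    v3 a b c = v3 a' b' c' ↔ a = a' ∧ b = b' ∧ c = c' := by
  refine ⟨fun h => ?_, by rintro ⟨rfl, rfl, rfl⟩; rfl⟩
  have h' := congrArg (WithLp.equiv 2 _) h
  exact ⟨congrFun h' 0, congrFun h' 1, congrFun h' 2⟩

lemma v3_add (a b c a' b' c' : ℝ) :
    v3 a b c + v3 a' b' c' = v3 (a + a') (b + b') (c + c') := by
  ext i; fin_cases i <;> simp

lemma v3_sub (a b c a' b' c' : ℝ) :
    v3 a b c - v3 a' b' c' = v3 (a - a') (b - b') (c - c') := by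
  ext i; fin_cases i <;> simp

lemma smul_v3 (s a b c : ℝ) : s • v3 a b c = v3 (s * a) (s * b) (s * c) := by
  ext i; fin_cases i <;> simp

lemma inner_v3 (a b c a' b' c' : ℝ) :
    ⟪v3 a b c, v3 a' b' c'⟫ = a * a' + b * b' + c * c' := by
  simp [PiLp.inner_apply, Fin.sum_univ_three]; ring

lemma norm_v3 (a b c : ℝ) : ‖v3 a b c‖ = √(a ^ 2 + b ^ 2 + c ^ 2) := by
  simp [EuclideanSpace.norm_eq, Fin.sum_univ_three]

lemma cubev_inj {a b c a' b' c' : ℝ} :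
    cubev a b c = cubev a' b' c' ↔ a = a' ∧ b = b' ∧ c = c' :=
  (smul_right_injective _ (by positivity : (√3)⁻¹ ≠ 0)).eq_iff.trans v3_inj

lemma inner_cubev (a b c a' b' c' : ℝ) :
    ⟪cubev a b c, cubev a' b' c'⟫ = (a * a' + b * b' + c * c') / 3 := by
  have h3 : (√3)⁻¹ * (√3)⁻¹ = (3 : ℝ)⁻¹ := by rw [← mul_inv, Real.mul_self_sqrt (by norm_num)]
  rw [cubev, cubev, real_inner_smul_left, real_inner_smul_right, inner_v3, ← mul_assoc, h3,
    inv_mul_eq_div]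

lemma smul_sub_cubev (a b c a' b' c' : ℝ) :
    (√3 / 2) • (cubev a b c - cubev a' b' c') =
      v3 ((a - a') / 2) ((b - b') / 2) ((c - c') / 2) := by
  simp only [cubev, smul_v3, v3_sub, v3_inj]
  refine ⟨?_, ?_, ?_⟩ <;> field_simp

lemma cubev_mem_cubeS {a b c : ℝ} (ha : a = 1 ∨ a = -1) (hb : b = 1 ∨ b = -1)
    (hc : c = 1 ∨ c = -1) : cubev a b c ∈ cubeS := by
  rcases ha with rfl | rfl <;> rcases hb with rfl | rfl <;> rcases hc with rfl | rfl <;>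
    simp [cubeS]

lemma ncard_octS : octS.ncard = 6 := by
  simp only [octS]
  repeat rw [Set.ncard_insert_of_notMem (by norm_num) (Set.toFinite _)]
  simp

lemma ncard_cubeS : cubeS.ncard = 8 := by
  simp only [cubeS]
  repeat rw [Set.ncard_insert_of_notMem (by simp [cubev_inj]; norm_num) (Set.toFinite _)]
  simp

lemma octS_ne_cubeS : octS ≠ cubeS := fun h => by
  simpa [h, ncard_cubeS] using ncard_octS

lemma norm_octS : ∀ v ∈ octS, ‖v‖ = 1 := by
  rintro v (rfl | rfl | rfl | rfl | rfl | rfl) <;> simp [norm_v3]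

lemma norm_cubeS : ∀ v ∈ cubeS, ‖v‖ = 1 := by
  rintro v (rfl | rfl | rfl | rfl | rfl | rfl | rfl | rfl) <;>
    norm_num [cubev, norm_smul, norm_v3, abs_of_nonneg]

lemma cubev_mem_orthogonalTripleSums_octS {a b c : ℝ} (ha : a = 1 ∨ a = -1)
    (hb : b = 1 ∨ b = -1) (hc : c = 1 ∨ c = -1) :
    cubev a b c ∈ orthogonalTripleSums (√3)⁻¹ octS := by
  refine ⟨v3 a 0 0, ?_, v3 0 b 0, ?_, v3 0 0 c, ?_, by simp [inner_v3], by simp [inner_v3],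
    by simp [inner_v3], by simp [cubev, v3_add]⟩
  · rcases ha with rfl | rfl <;> simp [octS]
  · rcases hb with rfl | rfl <;> simp [octS]
  · rcases hc with rfl | rfl <;> simp [octS]

lemma orthogonalTripleSums_octS : orthogonalTripleSums (√3)⁻¹ octS = cubeS := by
  apply subset_antisymm
  · rintro v ⟨x, hx, y, hy, z, hz, hxy, hxz, hyz, rfl⟩
    rcases hx with rfl | rfl | rfl | rfl | rfl | rfl <;>
      rcases hy with rfl | rfl | rfl | rfl | rfl | rfl <;>
      rw [inner_v3] at hxy <;> norm_num at hxy <;>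
      rcases hz with rfl | rfl | rfl | rfl | rfl | rfl <;>
      rw [inner_v3] at hxz hyz <;> norm_num at hxz <;> norm_num at hyz <;>
      rw [v3_add, v3_add] <;> exact cubev_mem_cubeS (by norm_num) (by norm_num) (by norm_num)
  · rintro v (rfl | rfl | rfl | rfl | rfl | rfl | rfl | rfl) <;>
      exact cubev_mem_orthogonalTripleSums_octS (by norm_num) (by norm_num) (by norm_num)

lemma scaledDifferences_cubeS : scaledDifferences (1 / 3) (√3 / 2) cubeS = octS := by
  apply subset_antisymm
  · rintro v ⟨u, hu, w, hw, huw, rfl⟩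
    rcases hu with rfl | rfl | rfl | rfl | rfl | rfl | rfl | rfl <;>
      rcases hw with rfl | rfl | rfl | rfl | rfl | rfl | rfl | rfl <;>
      rw [inner_cubev] at huw <;> norm_num at huw <;> norm_num [smul_sub_cubev, octS]
  · rintro v (rfl | rfl | rfl | rfl | rfl | rfl)
    · exact ⟨cubev 1 1 1, by simp [cubeS], cubev (-1) 1 1, by simp [cubeS],
        by norm_num [inner_cubev], by norm_num [smul_sub_cubev]⟩
    · exact ⟨cubev (-1) 1 1, by simp [cubeS], cubev 1 1 1, by simp [cubeS],
        by norm_num [inner_cubev], by norm_num [smul_sub_cubev]⟩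
    · exact ⟨cubev 1 1 1, by simp [cubeS], cubev 1 (-1) 1, by simp [cubeS],
        by norm_num [inner_cubev], by norm_num [smul_sub_cubev]⟩
    · exact ⟨cubev 1 (-1) 1, by simp [cubeS], cubev 1 1 1, by simp [cubeS],
        by norm_num [inner_cubev], by norm_num [smul_sub_cubev]⟩
    · exact ⟨cubev 1 1 1, by simp [cubeS], cubev 1 1 (-1), by simp [cubeS],
        by norm_num [inner_cubev], by norm_num [smul_sub_cubev]⟩
    · exact ⟨cubev 1 1 (-1), by simp [cubeS], cubev 1 1 1, by simp [cubeS],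
        by norm_num [inner_cubev], by norm_num [smul_sub_cubev]⟩

lemma pointGroup_octS_eq_pointGroup_cubeS : pointGroup octS = pointGroup cubeS :=
  (pointGroup_subset_of_equivariant (fun μ S => μ.image_orthogonalTripleSums _ S)
    orthogonalTripleSums_octS).antisymm
  (pointGroup_subset_of_equivariant (fun μ S => μ.image_scaledDifferences _ _ S)
    scaledDifferences_cubeS)

lemma bondCosines_octS : bondCosines octS = {0, -1} := by
  ext t
  constructor
  · rintro ⟨b, hb, b', hb', hne, rfl⟩
    rcases hb with rfl | rfl | rfl | rfl | rfl | rfl <;>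
      rcases hb' with rfl | rfl | rfl | rfl | rfl | rfl <;> simp_all [inner_v3]
  · rintro (rfl | rfl)
    · exact ⟨v3 1 0 0, by simp [octS], v3 0 1 0, by simp [octS], by simp, by simp [inner_v3]⟩
    · exact ⟨v3 1 0 0, by simp [octS], v3 (-1) 0 0, by simp [octS], by norm_num,
        by simp [inner_v3]⟩

lemma bondCosines_cubeS : bondCosines cubeS = {1 / 3, -(1 / 3), -1} := by
  ext t
  constructor
  · rintro ⟨b, hb, b', hb', hne, rfl⟩
    rcases hb with rfl | rfl | rfl | rfl | rfl | rfl | rfl | rfl <;>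
      rcases hb' with rfl | rfl | rfl | rfl | rfl | rfl | rfl | rfl <;>
      simp_all [inner_cubev] <;> norm_num
  · rintro (rfl | rfl | rfl)
    · exact ⟨cubev 1 1 1, by simp [cubeS], cubev 1 1 (-1), by simp [cubeS],
        by norm_num [cubev_inj], by norm_num [inner_cubev]⟩
    · exact ⟨cubev 1 1 1, by simp [cubeS], cubev 1 (-1) (-1), by simp [cubeS],
        by norm_num [cubev_inj], by norm_num [inner_cubev]⟩
    · exact ⟨cubev 1 1 1, by simp [cubeS], cubev (-1) (-1) (-1), by simp [cubeS],
        by norm_num [cubev_inj], by norm_num [inner_cubev]⟩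

lemma Ecoeff_octS : Ecoeff octS = Real.logb 2 (15 / 2) := by
  rw [Ecoeff, ncard_angleSet_of_norm_eq_one norm_octS, ncard_octS, bondCosines_octS,
    Set.ncard_pair (by norm_num), ← Real.logb_div (by norm_num [Nat.choose]) (by norm_num)]
  norm_num [Nat.choose]

lemma Ecoeff_cubeS : Ecoeff cubeS = Real.logb 2 (28 / 3) := by
  rw [Ecoeff, ncard_angleSet_of_norm_eq_one norm_cubeS, ncard_cubeS, bondCosines_cubeS,
    Set.ncard_insert_of_notMem (by norm_num), Set.ncard_pair (by norm_num),
    ← Real.logb_div (by norm_num [Nat.choose]) (by norm_num)]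
  norm_num [Nat.choose]

/-- There exist distinct finite subsets of the unit sphere in ℝ³ — the octahedral and
cube-diagonal bond sets — with equal point groups but different extracopularity
coefficients: `E` distinguishes geometries that point symmetry cannot. -/
theorem E_distinguishes_equal_point_groups :
    octS ≠ cubeS ∧ octS.Finite ∧ cubeS.Finite ∧
    (∀ v ∈ octS, ‖v‖ = 1) ∧ (∀ v ∈ cubeS, ‖v‖ = 1) ∧
    pointGroup octS = pointGroup cubeS ∧
    Ecoeff octS ≠ Ecoeff cubeS := by
  refine ⟨octS_ne_cubeS, Set.finite_of_ncard_ne_zero (by simp [ncard_octS]),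
    Set.finite_of_ncard_ne_zero (by simp [ncard_cubeS]), norm_octS, norm_cubeS,
    pointGroup_octS_eq_pointGroup_cubeS, ?_⟩
  rw [Ecoeff_octS, Ecoeff_cubeS]
  exact (Real.logb_lt_logb one_lt_two (by norm_num) (by norm_num)).ne
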